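/- arXiv:1510.02187 — 2 statements merged into one kernel-verified Lean document; each statement's English description precedes it below -/
import Mathlib

section
/- There exist functions γ₁ : (0,∞) → (0,∞), γ₁′ : (1,∞) → (0,∞) and γ₂ : (0,∞) → (0,∞), independent of all other data, with the following property. Let (E, λ) be a measure space, let M > 0, c > 0, let g : E → [0,∞) be measurable with ∫_E ℓ(g(x)) λ(dx) ≤ M/c², and set f := c·(g − 1). Then: (a) for every β > 0, ∫_E |f| · 1{|f| ≥ βc} dλ ≤ M γ₁(β)/c; (b) for every β > 1, ∫_E g · 1{g ≥ β} dλ ≤ M γ₁′(β)/c²; (c) for every β > 0, ∫_E f² · 1{|f| ≤ βc} dλ ≤ M γ₂(β). -/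
/-!
Everything follows from the pointwise bound `(√r - 1)² ≤ ℓ(r)`, which holds because
`ℓ(s²) - (s - 1)² = 2 s ℓ(s) ≥ 0`. Multiplying by `(√r + 1)² ≤ 2 (r + 1)` gives
`(r - 1)² ≤ 2 (r + 1) ℓ(r)`. On `{|r - 1| ≥ β}` the factor `r + 1` is at most a multiple of
`|r - 1|`, on `{|r - 1| ≤ β}` it is bounded, and `{r ≥ β}` lies in `{|r - 1| ≥ β - 1}`; so the integrand is at most a constant multiple of `ℓ(g)`
and the bounds follow by integrating against `∫ ℓ(g) ≤ M / c²`.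
-/

open MeasureTheory

/-- `ℓ(r) = r log r - r + 1` (with `ℓ(0) = 1`, which holds since `Real.log 0 = 0`). -/
noncomputable def ell (r : ℝ) : ℝ := r * Real.log r - r + 1

lemma ell_eq_klFun (r : ℝ) : ell r = InformationTheory.klFun r := by
  rw [ell, InformationTheory.klFun]; ring

lemma ell_nonneg {r : ℝ} (hr : 0 ≤ r) : 0 ≤ ell r :=
  ell_eq_klFun r ▸ InformationTheory.klFun_nonneg hr

lemma measurable_ell : Measurable ell := by
  unfold ell; fun_prop

lemma ell_sq_sub_sq_sub_one (s : ℝ) : ell (s ^ 2) - (s - 1) ^ 2 = 2 * s * ell s := by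
  rw [ell, ell, Real.log_pow]; push_cast; ring

lemma sq_sqrt_sub_one_le_ell {r : ℝ} (hr : 0 ≤ r) : (√r - 1) ^ 2 ≤ ell r := by
  have h := ell_sq_sub_sq_sub_one √r
  rw [Real.sq_sqrt hr] at h
  nlinarith [mul_nonneg (Real.sqrt_nonneg r) (ell_nonneg (Real.sqrt_nonneg r))]

lemma sq_sub_one_le_mul_ell {r : ℝ} (hr : 0 ≤ r) : (r - 1) ^ 2 ≤ 2 * (r + 1) * ell r := by
  have hsq : (r - 1) ^ 2 = (√r - 1) ^ 2 * (√r + 1) ^ 2 := by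
    conv_lhs => rw [← Real.sq_sqrt hr]
    ring
  have hplus : (√r + 1) ^ 2 ≤ 2 * (r + 1) := by
    nlinarith [Real.sq_sqrt hr, sq_nonneg (√r - 1)]
  calc (r - 1) ^ 2 = (√r - 1) ^ 2 * (√r + 1) ^ 2 := hsq
    _ ≤ ell r * (2 * (r + 1)) :=
        mul_le_mul (sq_sqrt_sub_one_le_ell hr) hplus (sq_nonneg _) (ell_nonneg hr)
    _ = 2 * (r + 1) * ell r := by ring

lemma abs_sub_one_le_mul_ell {r β : ℝ} (hr : 0 ≤ r) (hβ : 0 < β) (h : β ≤ |r - 1|) :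
    |r - 1| ≤ 2 * (β + 2) / β * ell r := by
  have hpos : 0 < |r - 1| := hβ.trans_le h
  -- `r + 1 = (r - 1) + 2 ≤ |r - 1| + 2 |r - 1| / β`
  have hplus : r + 1 ≤ (β + 2) / β * |r - 1| := by
    rw [div_mul_eq_mul_div, le_div_iff₀ hβ]
    nlinarith [le_abs_self (r - 1)]
  have hsq : |r - 1| * |r - 1| ≤ |r - 1| * (2 * (β + 2) / β * ell r) := by
    calc |r - 1| * |r - 1| = (r - 1) ^ 2 := by rw [← sq, sq_abs]
      _ ≤ 2 * (r + 1) * ell r := sq_sub_one_le_mul_ell hr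
      _ ≤ 2 * ((β + 2) / β * |r - 1|) * ell r := by gcongr; exact ell_nonneg hr
      _ = |r - 1| * (2 * (β + 2) / β * ell r) := by ring
  exact le_of_mul_le_mul_left hsq hpos

lemma le_mul_ell_of_le {r β : ℝ} (hβ : 1 < β) (h : β ≤ r) :
    r ≤ 2 * β * (β + 1) / (β - 1) ^ 2 * ell r := by
  have hβ1 : 0 < β - 1 := by linarith
  have hr1 : β - 1 ≤ |r - 1| := by rw [abs_of_nonneg (by linarith)]; linarith
  have ha := abs_sub_one_le_mul_ell (by linarith) hβ1 hr1
  rw [abs_of_nonneg (by linarith)] at ha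
  have hr : r ≤ β / (β - 1) * (r - 1) := by
    rw [div_mul_eq_mul_div, le_div_iff₀ hβ1]; nlinarith
  calc r ≤ β / (β - 1) * (r - 1) := hr
    _ ≤ β / (β - 1) * (2 * (β - 1 + 2) / (β - 1) * ell r) := by gcongr
    _ = 2 * β * (β + 1) / (β - 1) ^ 2 * ell r := by field_simp; ring

lemma sq_sub_one_le_mul_ell_of_abs_le {r β : ℝ} (hr : 0 ≤ r) (h : |r - 1| ≤ β) :
    (r - 1) ^ 2 ≤ 2 * (β + 2) * ell r :=
  calc (r - 1) ^ 2 ≤ 2 * (r + 1) * ell r := sq_sub_one_le_mul_ell hr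
    _ ≤ 2 * (β + 2) * ell r := by
        gcongr 2 * ?_ * _
        · exact ell_nonneg hr
        · linarith [(abs_le.mp h).2]

lemma setLIntegral_ofReal_le_of_le_mul {E : Type*} [MeasurableSpace E] {μ : Measure E}
    {S : Set E} {f ψ : E → ℝ} {K B : ℝ} (hψ : Measurable ψ) (hK : 0 ≤ K)
    (hle : ∀ x ∈ S, f x ≤ K * ψ x) (hint : ∫⁻ x, ENNReal.ofReal (ψ x) ∂μ ≤ ENNReal.ofReal B) :
    ∫⁻ x in S, ENNReal.ofReal (f x) ∂μ ≤ ENNReal.ofReal (K * B) :=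
  calc ∫⁻ x in S, ENNReal.ofReal (f x) ∂μ
      ≤ ∫⁻ x in S, ENNReal.ofReal K * ENNReal.ofReal (ψ x) ∂μ :=
        setLIntegral_mono (by fun_prop) fun x hx => by
          rw [← ENNReal.ofReal_mul hK]; exact ENNReal.ofReal_le_ofReal (hle x hx)
    _ ≤ ∫⁻ x, ENNReal.ofReal K * ENNReal.ofReal (ψ x) ∂μ := setLIntegral_le_lintegral _ _
    _ = ENNReal.ofReal K * ∫⁻ x, ENNReal.ofReal (ψ x) ∂μ :=
        lintegral_const_mul' _ _ ENNReal.ofReal_ne_top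
    _ ≤ ENNReal.ofReal K * ENNReal.ofReal B := by gcongr
    _ = ENNReal.ofReal (K * B) := (ENNReal.ofReal_mul hK).symm
/-- There exist universal functions `γ₁ : (0,∞) → (0,∞)`, `γ₁′ : (1,∞) → (0,∞)`,
`γ₂ : (0,∞) → (0,∞)` such that: for any measure space `(E,λ)`, `M, c > 0`, and any
measurable `g : E → [0,∞)` with `∫ ℓ(g) dλ ≤ M/c²`, setting `f := c·(g−1)`:
(a) `∫ |f| 1{|f| ≥ βc} dλ ≤ M γ₁(β)/c` for every `β > 0`;
(b) `∫ g 1{g ≥ β} dλ ≤ M γ₁′(β)/c²` for every `β > 1`;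
(c) `∫ f² 1{|f| ≤ βc} dλ ≤ M γ₂(β)` for every `β > 0`. -/
theorem stmt5 :
    ∃ γ₁ γ₁' γ₂ : ℝ → ℝ,
      (∀ β : ℝ, 0 < β → 0 < γ₁ β) ∧ (∀ β : ℝ, 1 < β → 0 < γ₁' β) ∧
      (∀ β : ℝ, 0 < β → 0 < γ₂ β) ∧
      ∀ (E : Type*) (_ : MeasurableSpace E) (μ : Measure E) (M c : ℝ),
        0 < M → 0 < c →
        ∀ g : E → ℝ, Measurable g → (∀ x, 0 ≤ g x) →
        (∫⁻ x, ENNReal.ofReal (ell (g x)) ∂μ ≤ ENNReal.ofReal (M / c ^ 2)) →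
        (∀ β : ℝ, 0 < β →
          ∫⁻ x in {x | β * c ≤ |c * (g x - 1)|}, ENNReal.ofReal |c * (g x - 1)| ∂μ
            ≤ ENNReal.ofReal (M * γ₁ β / c)) ∧
        (∀ β : ℝ, 1 < β →
          ∫⁻ x in {x | β ≤ g x}, ENNReal.ofReal (g x) ∂μ
            ≤ ENNReal.ofReal (M * γ₁' β / c ^ 2)) ∧
        (∀ β : ℝ, 0 < β →
          ∫⁻ x in {x | |c * (g x - 1)| ≤ β * c}, ENNReal.ofReal ((c * (g x - 1)) ^ 2) ∂μ
            ≤ ENNReal.ofReal (M * γ₂ β)) := by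
  refine ⟨fun β => 2 * (β + 2) / β, fun β => 2 * β * (β + 1) / (β - 1) ^ 2,
    fun β => 2 * (β + 2), fun β hβ => by positivity,
    fun β hβ => div_pos (by nlinarith) (pow_pos (by linarith) 2), fun β hβ => by positivity, ?_⟩
  intro E _ μ M c hM hc g hg hg0 hint
  have hell : Measurable fun x => ell (g x) := measurable_ell.comp hg
  refine ⟨fun β hβ => ?_, fun β hβ => ?_, fun β hβ => ?_⟩
  · refine (setLIntegral_ofReal_le_of_le_mul (K := c * (2 * (β + 2) / β)) hell (by positivity)
      (fun x (hx : β * c ≤ |c * (g x - 1)|) => ?_) hint).trans_eq (by congr 1; field_simp)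
    rw [abs_mul, abs_of_pos hc] at hx ⊢
    rw [mul_assoc]
    exact mul_le_mul_of_nonneg_left
      (abs_sub_one_le_mul_ell (hg0 x) hβ (le_of_mul_le_mul_left (by linarith) hc)) hc.le
  · exact (setLIntegral_ofReal_le_of_le_mul hell (by positivity)
      (fun x hx => le_mul_ell_of_le hβ hx) hint).trans_eq (by congr 1; field_simp)
  · refine (setLIntegral_ofReal_le_of_le_mul (K := c ^ 2 * (2 * (β + 2))) hell (by positivity)
      (fun x (hx : |c * (g x - 1)| ≤ β * c) => ?_) hint).trans_eq (by congr 1; field_simp)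
    rw [abs_mul, abs_of_pos hc] at hx
    rw [mul_pow, mul_assoc]
    exact mul_le_mul_of_nonneg_left
      (sq_sub_one_le_mul_ell_of_abs_le (hg0 x) (le_of_mul_le_mul_left (by linarith) hc))
      (sq_nonneg c)
end

section
/- Suppose ‖Γ‖_∞ < ∞ and in addition: (i) sup_{q∈Ŝ} sup_{j∈ℕ} ∑_{i=1}^∞ |Γ_ij(q)| ≤ c_Γ for some c_Γ ∈ (0,∞), and (ii) there exists L_Γ ∈ (0,∞) such that sup_{i∈ℕ} ∑_{j≠i} |Γ_ij(q̃) − Γ_ij(q)| ≤ L_Γ ‖q̃ − q‖ for all q, q̃ ∈ Ŝ. Then there exists γ₅ ∈ (0,∞), depending only on ‖Γ‖_∞, c_Γ and L_Γ, such that for every bounded measurable g : X → ℝ and all q, q̃ ∈ Ŝ, the ℓ²(ℕ)-valued Bochner integral ∫_X (G(q̃,y) − G(q,y)) g(y) λ_X(dy) exists and satisfies ‖∫_X (G(q̃,y) − G(q,y)) g(y) λ_X(dy)‖ ≤ γ₅ ‖g‖_∞ ‖q̃ − q‖. -/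
noncomputable section
open MeasureTheory

/-- The Hilbert space `ℓ²(ℕ)` of square-summable real sequences. -/
abbrev H2 : Type := lp (fun _ : ℕ => ℝ) 2

/-- The simplex `Ŝ` of probability vectors in `ℓ²(ℕ)`. -/
def simplexS : Set H2 := {q | (∀ i, 0 ≤ q i) ∧ HasSum (fun i => q i) 1}

/-- The set `A_ij(q) ⊆ X = [0,∞)²` (here `K` plays the role of `‖Γ‖_∞`). -/
def Aset (K : ℝ) (Γ : H2 → ℕ → ℕ → ℝ) (q : H2) (i j : ℕ) : Set (ℝ × ℝ) :=
  Set.Ioc (i : ℝ) (i + 1) ×ˢ Set.Ioc ((j : ℝ) * K) ((j : ℝ) * K + q i * Γ q i j)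

/-- The map `G : Ŝ × X → ℓ²(ℕ)`, `G(q,y) = ∑_{i ≠ j} (e_j − e_i) 1_{A_ij(q)}(y)`:
since the `A_ij(q)` are pairwise disjoint, `G(q,y) = e_j − e_i` for the (unique)
pair `(i,j)`, `i ≠ j`, with `y ∈ A_ij(q)`, and `G(q,y) = 0` otherwise. -/
def Gmap (K : ℝ) (Γ : H2 → ℕ → ℕ → ℝ) (q : H2) (y : ℝ × ℝ) : H2 :=
  @dite _ (∃ p : ℕ × ℕ, p.1 ≠ p.2 ∧ y ∈ Aset K Γ q p.1 p.2) (Classical.dec _)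
    (fun h => lp.single 2 h.choose.2 1 - lp.single 2 h.choose.1 1) (fun _ => 0)

/-- The rate matrix hypotheses: `Γ_ij(q) ≥ 0` for `i ≠ j`,
`Γ_ii(q) = −∑_{j≠i} Γ_ij(q)` (a convergent sum), and `K` is an upper bound for
`sup_{q∈Ŝ} sup_i |Γ_ii(q)|` (i.e. `‖Γ‖_∞ ≤ K < ∞`). -/
structure RateMatrix (K : ℝ) (Γ : H2 → ℕ → ℕ → ℝ) : Prop where
  nonneg : ∀ q ∈ simplexS, ∀ i j, i ≠ j → 0 ≤ Γ q i j
  diag : ∀ q ∈ simplexS, ∀ i,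
    HasSum (fun j => if j = i then 0 else Γ q i j) (-(Γ q i i))
  bound : ∀ q ∈ simplexS, ∀ i, |Γ q i i| ≤ K

/-!
Put `x = ∫ g(y) (G(q̃,y) − G(q,y)) dy`. Since the `A_ij(q)` are disjoint,
`G(q,·) = ∑_{i≠j} (e_j − e_i) 1_{A_ij(q)}`, so pairing with `x` gives
`‖x‖² = ∫ g ⟪x, G(q̃,·) − G(q,·)⟫ ≤ ‖g‖_∞ ∑_{i,j} (|x_i| + |x_j|) λ(A_ij(q̃) ∆ A_ij(q))`,
where `λ(A_ij(q̃) ∆ A_ij(q)) ≤ |q̃_i Γ_ij(q̃) − q_i Γ_ij(q)|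
  ≤ q̃_i |Γ_ij(q̃) − Γ_ij(q)| + |q̃_i − q_i| Γ_ij(q)`.
The terms with `q̃_i` are bounded by `2 L_Γ ‖x‖ ‖q̃ − q‖` using (ii) and `∑ q̃_i = 1`; the terms
with `|q̃_i − q_i|` by `(‖Γ‖_∞ + √(c_Γ ‖Γ‖_∞)) ‖x‖ ‖q̃ − q‖` using Cauchy–Schwarz on `ℕ × ℕ`
(Schur's test) with row sums `≤ ‖Γ‖_∞` and column sums `≤ c_Γ`. Dividing by `‖x‖` gives
`γ₅ = 2 L_Γ + ‖Γ‖_∞ + √(c_Γ ‖Γ‖_∞)`.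

The double series are summed in `ℝ≥0∞`, where Fubini and comparison hold without
summability side conditions.
-/

open scoped ENNReal InnerProductSpace symmDiff Interval
open Set Function

namespace ENNReal

variable {ι κ : Type*}

theorem sq_tsum_le_tsum_mul_tsum_of_sq_le_mul {r f g : ι → ℝ≥0∞}
    (h : ∀ i, r i ^ 2 ≤ f i * g i) : (∑' i, r i) ^ 2 ≤ (∑' i, f i) * ∑' i, g i := by
  have hsqrt : ∀ x : ℝ≥0∞, (x ^ (2⁻¹ : ℝ)) ^ (2 : ℝ) = x := fun x => by
    rw [← ENNReal.rpow_mul]; norm_num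
  have hfin : ∀ s : Finset ι, ∑ i ∈ s, r i ≤
      (∑' i, f i) ^ (2⁻¹ : ℝ) * (∑' i, g i) ^ (2⁻¹ : ℝ) := fun s => calc
    ∑ i ∈ s, r i ≤ ∑ i ∈ s, f i ^ (2⁻¹ : ℝ) * g i ^ (2⁻¹ : ℝ) := by
      gcongr with i
      rw [← ENNReal.mul_rpow_of_nonneg _ _ (by norm_num),
        ← ENNReal.pow_rpow_inv_natCast two_ne_zero (r i)]
      exact ENNReal.rpow_le_rpow (h i) (by norm_num)
    _ ≤ (∑ i ∈ s, f i) ^ (2⁻¹ : ℝ) * (∑ i ∈ s, g i) ^ (2⁻¹ : ℝ) := by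
      simpa [hsqrt] using ENNReal.inner_le_Lp_mul_Lq s (fun i => f i ^ (2⁻¹ : ℝ))
        (fun i => g i ^ (2⁻¹ : ℝ)) Real.HolderConjugate.two_two
    _ ≤ _ := by gcongr <;> exact ENNReal.sum_le_tsum s
  calc (∑' i, r i) ^ 2 ≤ ((∑' i, f i) ^ (2⁻¹ : ℝ) * (∑' i, g i) ^ (2⁻¹ : ℝ)) ^ 2 := by
        gcongr
        rw [ENNReal.tsum_eq_iSup_sum]
        exact iSup_le hfin
    _ = (∑' i, f i) * ∑' i, g i := by
        rw [mul_pow, ← ENNReal.rpow_natCast, ← ENNReal.rpow_natCast, Nat.cast_ofNat, hsqrt, hsqrt]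

theorem tsum_prod_sq_mul_le (u : ι → ℝ≥0∞) (M : ι → κ → ℝ≥0∞) {R : ℝ≥0∞}
    (hrow : ∀ i, ∑' j, M i j ≤ R) :
    ∑' p : ι × κ, u p.1 ^ 2 * M p.1 p.2 ≤ R * ∑' i, u i ^ 2 := calc
  ∑' p : ι × κ, u p.1 ^ 2 * M p.1 p.2 = ∑' i, u i ^ 2 * ∑' j, M i j := by
    rw [ENNReal.tsum_prod']; simp_rw [ENNReal.tsum_mul_left]
  _ ≤ ∑' i, u i ^ 2 * R := by gcongr with i; exact hrow i
  _ = R * ∑' i, u i ^ 2 := by rw [ENNReal.tsum_mul_right, mul_comm]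

theorem tsum_prod_mul_sq_le (v : κ → ℝ≥0∞) (M : ι → κ → ℝ≥0∞) {C : ℝ≥0∞}
    (hcol : ∀ j, ∑' i, M i j ≤ C) :
    ∑' p : ι × κ, M p.1 p.2 * v p.2 ^ 2 ≤ C * ∑' j, v j ^ 2 := calc
  ∑' p : ι × κ, M p.1 p.2 * v p.2 ^ 2 = ∑' j, (∑' i, M i j) * v j ^ 2 := by
    rw [ENNReal.tsum_prod', ENNReal.tsum_comm]; simp_rw [ENNReal.tsum_mul_right]
  _ ≤ ∑' j, C * v j ^ 2 := by gcongr with j; exact hcol j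
  _ = C * ∑' j, v j ^ 2 := ENNReal.tsum_mul_left

theorem sq_tsum_mul_mul_le (u : ι → ℝ≥0∞) (v : κ → ℝ≥0∞) (M : ι → κ → ℝ≥0∞) {R C : ℝ≥0∞}
    (hrow : ∀ i, ∑' j, M i j ≤ R) (hcol : ∀ j, ∑' i, M i j ≤ C) :
    (∑' p : ι × κ, u p.1 * M p.1 p.2 * v p.2) ^ 2 ≤ (R * ∑' i, u i ^ 2) * (C * ∑' j, v j ^ 2) :=
  (sq_tsum_le_tsum_mul_tsum_of_sq_le_mul (f := fun p => u p.1 ^ 2 * M p.1 p.2)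
    (g := fun p => M p.1 p.2 * v p.2 ^ 2) fun p => le_of_eq (by ring)).trans
    (mul_le_mul' (tsum_prod_sq_mul_le u M hrow) (tsum_prod_mul_sq_le v M hcol))

theorem sq_tsum_mul_mul_le_of_row (u v : ι → ℝ≥0∞) (M : ι → κ → ℝ≥0∞) {R : ℝ≥0∞}
    (hrow : ∀ i, ∑' j, M i j ≤ R) :
    (∑' p : ι × κ, u p.1 * M p.1 p.2 * v p.1) ^ 2 ≤ (R * ∑' i, u i ^ 2) * (R * ∑' i, v i ^ 2) :=
  (sq_tsum_le_tsum_mul_tsum_of_sq_le_mul (f := fun p => u p.1 ^ 2 * M p.1 p.2)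
    (g := fun p => v p.1 ^ 2 * M p.1 p.2) fun p => le_of_eq (by ring)).trans
    (mul_le_mul' (tsum_prod_sq_mul_le u M hrow) (tsum_prod_sq_mul_le v M hrow))

theorem tsum_add_mul_add_mul_le {a δ w : ι → ℝ≥0∞} {d M : ι → ι → ℝ≥0∞} {N Δ D K c S : ℝ≥0∞}
    (ha : ∑' i, a i ^ 2 ≤ N ^ 2) (hδ : ∑' i, δ i ^ 2 ≤ Δ ^ 2) (hw : ∑' i, w i ≤ 1)
    (hd : ∀ i, ∑' j, d i j ≤ D) (hrow : ∀ i, ∑' j, M i j ≤ K) (hcol : ∀ j, ∑' i, M i j ≤ c)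
    (hS : c * K ≤ S ^ 2) :
    ∑' p : ι × ι, (a p.1 + a p.2) * (w p.1 * d p.1 p.2 + δ p.1 * M p.1 p.2)
      ≤ 2 * N * D + (K + S) * N * Δ := by
  have haN : ∀ i, a i ≤ N := fun i =>
    (ENNReal.pow_le_pow_left_iff two_ne_zero).1 ((ENNReal.le_tsum i).trans ha)
  have hjump : ∑' p : ι × ι, (a p.1 + a p.2) * (w p.1 * d p.1 p.2) ≤ 2 * N * D := calc
    _ ≤ ∑' p : ι × ι, 2 * N * (w p.1 * d p.1 p.2) := by
      gcongr with p
      rw [two_mul]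
      exact add_le_add (haN _) (haN _)
    _ = 2 * N * ∑' i, w i * ∑' j, d i j := by
      rw [ENNReal.tsum_mul_left, ENNReal.tsum_prod']; simp_rw [ENNReal.tsum_mul_left]
    _ ≤ 2 * N * ∑' i, w i * D := by gcongr with i; exact hd i
    _ ≤ 2 * N * D := by
      rw [ENNReal.tsum_mul_right]
      exact mul_le_mul_right (mul_le_of_le_one_left zero_le hw) _
  have hdiag : ∑' p : ι × ι, a p.1 * M p.1 p.2 * δ p.1 ≤ K * N * Δ := by
    rw [← ENNReal.pow_le_pow_left_iff two_ne_zero]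
    calc _ ≤ (K * ∑' i, a i ^ 2) * (K * ∑' i, δ i ^ 2) := sq_tsum_mul_mul_le_of_row a δ M hrow
      _ ≤ (K * N ^ 2) * (K * Δ ^ 2) := by gcongr
      _ = (K * N * Δ) ^ 2 := by ring
  have hschur : ∑' p : ι × ι, δ p.1 * M p.1 p.2 * a p.2 ≤ S * N * Δ := by
    rw [← ENNReal.pow_le_pow_left_iff two_ne_zero]
    calc _ ≤ (K * ∑' i, δ i ^ 2) * (c * ∑' j, a j ^ 2) := sq_tsum_mul_mul_le δ a M hrow hcol
      _ ≤ (K * Δ ^ 2) * (c * N ^ 2) := by gcongr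
      _ = c * K * (N * Δ) ^ 2 := by ring
      _ ≤ S ^ 2 * (N * Δ) ^ 2 := by gcongr
      _ = (S * N * Δ) ^ 2 := by ring
  calc _ = ∑' p : ι × ι, (a p.1 + a p.2) * (w p.1 * d p.1 p.2)
        + ∑' p : ι × ι, a p.1 * M p.1 p.2 * δ p.1 + ∑' p : ι × ι, δ p.1 * M p.1 p.2 * a p.2 := by
        rw [← ENNReal.tsum_add, ← ENNReal.tsum_add]
        exact tsum_congr fun p => by ring
    _ ≤ 2 * N * D + K * N * Δ + S * N * Δ := add_le_add (add_le_add hjump hdiag) hschur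
    _ = 2 * N * D + (K + S) * N * Δ := by ring

end ENNReal

theorem lp.tsum_enorm_sq {α : Type*} {E : α → Type*} [∀ i, NormedAddCommGroup (E i)]
    (x : lp E 2) : ∑' i, ‖x i‖ₑ ^ 2 = ‖x‖ₑ ^ 2 := by
  have h := lp.hasSum_norm (by norm_num : (0 : ℝ) < (2 : ℝ≥0∞).toReal) x
  simp only [ENNReal.toReal_ofNat, Real.rpow_two] at h
  simp only [← ofReal_norm, ← ENNReal.ofReal_pow (norm_nonneg _)]
  rw [← ENNReal.ofReal_tsum_of_nonneg (fun i => by positivity) h.summable, h.tsum_eq]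

theorem apply_le_one_of_mem_simplexS {q : H2} (hq : q ∈ simplexS) (i : ℕ) : q i ≤ 1 :=
  le_hasSum hq.2 i fun j _ => hq.1 j

namespace RateMatrix

variable {K : ℝ} {Γ : H2 → ℕ → ℕ → ℝ} (hΓ : RateMatrix K Γ) {q : H2} (hq : q ∈ simplexS)
include hΓ hq

theorem offDiag_nonneg (i j : ℕ) : 0 ≤ if j = i then 0 else Γ q i j := by
  split_ifs with h
  exacts [le_rfl, hΓ.nonneg q hq i j (Ne.symm h)]

theorem diag_nonpos (i : ℕ) : Γ q i i ≤ 0 :=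
  neg_nonneg.1 ((hΓ.diag q hq i).nonneg (hΓ.offDiag_nonneg hq i))

theorem le_of_ne {i j : ℕ} (hij : i ≠ j) : Γ q i j ≤ K := by
  have h := le_hasSum (hΓ.diag q hq i) j fun k _ => hΓ.offDiag_nonneg hq i k
  rw [if_neg hij.symm] at h
  linarith [(abs_le.1 (hΓ.bound q hq i)).1]

theorem tsum_ofReal_le (i : ℕ) : ∑' j, ENNReal.ofReal (Γ q i j) ≤ ENNReal.ofReal K := calc
  ∑' j, ENNReal.ofReal (Γ q i j) = ∑' j, ENNReal.ofReal (if j = i then 0 else Γ q i j) :=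
    tsum_congr fun j => by
      split_ifs with h
      · rw [h, ENNReal.ofReal_zero, ENNReal.ofReal_eq_zero]
        exact hΓ.diag_nonpos hq i
      · rfl
  _ = ENNReal.ofReal (-Γ q i i) := by
    rw [← ENNReal.ofReal_tsum_of_nonneg (hΓ.offDiag_nonneg hq i) (hΓ.diag q hq i).summable,
      (hΓ.diag q hq i).tsum_eq]
  _ ≤ ENNReal.ofReal K := ENNReal.ofReal_le_ofReal (neg_le.1 (abs_le.1 (hΓ.bound q hq i)).1)

end RateMatrix

theorem measurableSet_Aset (K : ℝ) (Γ : H2 → ℕ → ℕ → ℝ) (q : H2) (i j : ℕ) :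
    MeasurableSet (Aset K Γ q i j) :=
  measurableSet_Ioc.prod measurableSet_Ioc

theorem volume_Aset (K : ℝ) (Γ : H2 → ℕ → ℕ → ℝ) (q : H2) (i j : ℕ) :
    volume (Aset K Γ q i j) = ENNReal.ofReal (q i * Γ q i j) := by
  simp [Aset, Measure.volume_eq_prod, Measure.prod_prod, Real.volume_Ioc]

section Aset

variable {K : ℝ} {Γ : H2 → ℕ → ℕ → ℝ} (hΓ : RateMatrix K Γ) {q : H2} (hq : q ∈ simplexS)
include hΓ hq

theorem Aset_self (i : ℕ) : Aset K Γ q i i = ∅ := by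
  have h := mul_nonpos_of_nonneg_of_nonpos (hq.1 i) (hΓ.diag_nonpos hq i)
  refine eq_empty_of_forall_notMem fun y hy => ?_
  obtain ⟨-, hy_gt, hy_le⟩ := hy
  linarith

theorem Aset_subset_cell (i j : ℕ) :
    Aset K Γ q i j ⊆ Ioc (i : ℝ) (i + 1) ×ˢ Ioc ((j : ℝ) * K) (j * K + K) := by
  rcases eq_or_ne i j with rfl | hij
  · simp [Aset_self hΓ hq]
  have : q i * Γ q i j ≤ K := calc
    q i * Γ q i j ≤ 1 * K := mul_le_mul (apply_le_one_of_mem_simplexS hq i) (hΓ.le_of_ne hq hij)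
        (hΓ.nonneg q hq i j hij) zero_le_one
    _ = K := one_mul K
  exact prod_mono_right (Ioc_subset_Ioc_right (by linarith))

theorem pairwise_disjoint_Aset :
    Pairwise (Disjoint on fun p : ℕ × ℕ => Aset K Γ q p.1 p.2) := by
  rintro ⟨i, j⟩ ⟨k, l⟩ hne
  refine Disjoint.mono (Aset_subset_cell hΓ hq i j) (Aset_subset_cell hΓ hq k l) ?_
  rw [disjoint_prod]
  rcases eq_or_ne i k with rfl | hik
  · have hjl : (j : ℤ) ≠ l := by exact_mod_cast fun h => hne (by rw [h])
    right
    simpa only [Function.onFun, zero_add, zsmul_eq_mul, Int.cast_natCast, Int.cast_add,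
      Int.cast_one, add_mul, one_mul] using pairwise_disjoint_Ioc_add_zsmul (0 : ℝ) K hjl
  · left
    simpa only [Function.onFun, Int.cast_natCast] using
      pairwise_disjoint_Ioc_intCast ℝ (by exact_mod_cast hik : (i : ℤ) ≠ k)

theorem tsum_volume_Aset_le : ∑' p : ℕ × ℕ, volume (Aset K Γ q p.1 p.2) ≤ ENNReal.ofReal K := calc
  ∑' p : ℕ × ℕ, volume (Aset K Γ q p.1 p.2)
      = ∑' i, ENNReal.ofReal (q i) * ∑' j, ENNReal.ofReal (Γ q i j) := by
    rw [ENNReal.tsum_prod']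
    simp_rw [volume_Aset, ENNReal.ofReal_mul (hq.1 _), ENNReal.tsum_mul_left]
  _ ≤ ∑' i, ENNReal.ofReal (q i) * ENNReal.ofReal K := by
    gcongr with i
    exact hΓ.tsum_ofReal_le hq i
  _ = ENNReal.ofReal K := by
    rw [ENNReal.tsum_mul_right, ← ENNReal.ofReal_tsum_of_nonneg hq.1 hq.2.summable, hq.2.tsum_eq,
      ENNReal.ofReal_one, one_mul]

end Aset

def jump (p : ℕ × ℕ) : H2 := lp.single 2 p.2 1 - lp.single 2 p.1 1

theorem inner_jump (x : H2) (p : ℕ × ℕ) : ⟪x, jump p⟫_ℝ = x p.2 - x p.1 := by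
  simp [jump, inner_sub_right, lp.inner_single_right]

theorem enorm_inner_jump_le (x : H2) (p : ℕ × ℕ) : ‖⟪x, jump p⟫_ℝ‖ₑ ≤ ‖x p.1‖ₑ + ‖x p.2‖ₑ := by
  rw [inner_jump, add_comm]
  exact enorm_sub_le

theorem enorm_jump_le (p : ℕ × ℕ) : ‖jump p‖ₑ ≤ 2 := calc
  ‖jump p‖ₑ ≤ ‖(lp.single 2 p.2 1 : H2)‖ₑ + ‖(lp.single 2 p.1 1 : H2)‖ₑ := enorm_sub_le
  _ = 2 := by
    simp only [← ofReal_norm, lp.norm_single (by norm_num : (0 : ℝ≥0∞) < 2), norm_one]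
    norm_num

section Gmap

variable {K : ℝ} {Γ : H2 → ℕ → ℕ → ℝ} {q : H2} {y : ℝ × ℝ}

theorem Gmap_of_forall_notMem (h : ∀ p : ℕ × ℕ, y ∉ Aset K Γ q p.1 p.2) : Gmap K Γ q y = 0 := by
  rw [Gmap, dif_neg]
  rintro ⟨p, -, hp⟩
  exact h p hp

variable (hΓ : RateMatrix K Γ) (hq : q ∈ simplexS)
include hΓ hq

theorem Gmap_of_mem {p : ℕ × ℕ} (hy : y ∈ Aset K Γ q p.1 p.2) : Gmap K Γ q y = jump p := by
  have hp : p.1 ≠ p.2 := fun h => by simp [h, Aset_self hΓ hq] at hy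
  have hP : ∃ p' : ℕ × ℕ, p'.1 ≠ p'.2 ∧ y ∈ Aset K Γ q p'.1 p'.2 := ⟨p, hp, hy⟩
  have hchoose : hP.choose = p := by
    by_contra hne
    exact disjoint_left.1 (pairwise_disjoint_Aset hΓ hq hne) hP.choose_spec.2 hy
  rw [Gmap, dif_pos hP, hchoose]
  rfl

theorem hasSum_Gmap (y : ℝ × ℝ) :
    HasSum (fun p : ℕ × ℕ => (Aset K Γ q p.1 p.2).indicator (fun _ => jump p) y)
      (Gmap K Γ q y) := by
  by_cases h : ∃ p : ℕ × ℕ, y ∈ Aset K Γ q p.1 p.2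
  · obtain ⟨p, hp⟩ := h
    rw [Gmap_of_mem hΓ hq hp, ← indicator_of_mem hp (fun _ => jump p)]
    exact hasSum_single p fun p' hp' =>
      indicator_of_notMem (disjoint_right.1 (pairwise_disjoint_Aset hΓ hq hp') hp) _
  · push Not at h
    rw [Gmap_of_forall_notMem h]
    simp [indicator_of_notMem (h _), hasSum_zero]

theorem stronglyMeasurable_Gmap : StronglyMeasurable (Gmap K Γ q) :=
  stronglyMeasurable_of_tendsto Filter.atTop
    (fun s => Finset.stronglyMeasurable_fun_sum s fun p _ =>
      stronglyMeasurable_const.indicator (measurableSet_Aset K Γ q p.1 p.2))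
    (tendsto_pi_nhds.2 fun y => hasSum_Gmap hΓ hq y)

theorem integrable_Gmap : Integrable (Gmap K Γ q) := by
  refine ⟨(stronglyMeasurable_Gmap hΓ hq).aestronglyMeasurable, ?_⟩
  have hbound (y : ℝ × ℝ) :
      ‖Gmap K Γ q y‖ₑ ≤ ∑' p : ℕ × ℕ, (Aset K Γ q p.1 p.2).indicator (fun _ => 2) y :=
    (hasSum_Gmap hΓ hq y).enorm_le_of_bounded ENNReal.summable.hasSum fun p => by
      rw [enorm_indicator_eq_indicator_enorm]
      exact indicator_le_indicator (enorm_jump_le p)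
  calc ∫⁻ y, ‖Gmap K Γ q y‖ₑ ≤ ∫⁻ y, ∑' p : ℕ × ℕ, (Aset K Γ q p.1 p.2).indicator (fun _ => 2) y :=
        lintegral_mono hbound
    _ = 2 * ∑' p : ℕ × ℕ, volume (Aset K Γ q p.1 p.2) := by
      have hmeas (p : ℕ × ℕ) : AEMeasurable ((Aset K Γ q p.1 p.2).indicator fun _ => (2 : ℝ≥0∞)) :=
        (measurable_const.indicator (measurableSet_Aset K Γ q p.1 p.2)).aemeasurable
      rw [lintegral_tsum hmeas, ← ENNReal.tsum_mul_left]
      exact tsum_congr fun p => lintegral_indicator_const (measurableSet_Aset K Γ q p.1 p.2) 2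
    _ < ⊤ := ENNReal.mul_lt_top (by simp)
      ((tsum_volume_Aset_le hΓ hq).trans_lt ENNReal.ofReal_lt_top)

end Gmap

theorem symmDiff_Aset_subset (K : ℝ) (Γ : H2 → ℕ → ℕ → ℝ) (q q' : H2) (i j : ℕ) :
    Aset K Γ q' i j ∆ Aset K Γ q i j ⊆
      Ioc (i : ℝ) (i + 1) ×ˢ Ι (j * K + q i * Γ q i j) (j * K + q' i * Γ q' i j) := by
  rintro y (⟨⟨hy1, hy2⟩, hy⟩ | ⟨⟨hy1, hy2⟩, hy⟩) <;> refine ⟨hy1, ?_⟩ <;>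
    simp only [Aset, mem_prod, mem_Ioc, not_and, not_le] at hy1 hy2 hy <;> rw [mem_uIoc]
  · exact Or.inl ⟨hy hy1 hy2.1, hy2.2⟩
  · exact Or.inr ⟨hy hy1 hy2.1, hy2.2⟩

theorem volume_symmDiff_Aset_le (K : ℝ) (Γ : H2 → ℕ → ℕ → ℝ) (q q' : H2) (i j : ℕ) :
    volume (Aset K Γ q' i j ∆ Aset K Γ q i j) ≤
      ENNReal.ofReal |q' i * Γ q' i j - q i * Γ q i j| := by
  refine (measure_mono (symmDiff_Aset_subset K Γ q q' i j)).trans_eq ?_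
  rw [Measure.volume_eq_prod, Measure.prod_prod, Real.volume_Ioc, Real.volume_uIoc]
  simp

theorem volume_symmDiff_Aset_le_rate {K : ℝ} {Γ : H2 → ℕ → ℕ → ℝ} (hΓ : RateMatrix K Γ)
    {q q' : H2} (hq : q ∈ simplexS) (hq' : q' ∈ simplexS) (i j : ℕ) :
    volume (Aset K Γ q' i j ∆ Aset K Γ q i j) ≤
      ENNReal.ofReal (q' i) * ENNReal.ofReal (if j = i then 0 else |Γ q' i j - Γ q i j|)
        + ‖(q' - q) i‖ₑ * ENNReal.ofReal (Γ q i j) := by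
  rcases eq_or_ne i j with rfl | hij
  · simp [Aset_self hΓ hq, Aset_self hΓ hq']
  have hΓij := hΓ.nonneg q hq i j hij
  have hsplit : |q' i * Γ q' i j - q i * Γ q i j|
      ≤ q' i * |Γ q' i j - Γ q i j| + |q' i - q i| * Γ q i j := calc
    _ = |q' i * (Γ q' i j - Γ q i j) + (q' i - q i) * Γ q i j| := by ring_nf
    _ ≤ _ := by
      refine (abs_add_le _ _).trans_eq ?_
      rw [abs_mul, abs_mul, abs_of_nonneg (hq'.1 i), abs_of_nonneg hΓij]
  refine (volume_symmDiff_Aset_le K Γ q q' i j).trans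
    ((ENNReal.ofReal_le_ofReal hsplit).trans_eq ?_)
  rw [if_neg hij.symm, ENNReal.ofReal_add (by have := hq'.1 i; positivity) (by positivity),
    ENNReal.ofReal_mul (hq'.1 i), ENNReal.ofReal_mul (abs_nonneg _), Real.enorm_eq_ofReal_abs,
    lp.coeFn_sub, Pi.sub_apply]

section InnerBound

variable {K : ℝ} {Γ : H2 → ℕ → ℕ → ℝ} (hΓ : RateMatrix K Γ) {q q' : H2} (hq : q ∈ simplexS)
  (hq' : q' ∈ simplexS)
include hΓ hq hq'

theorem enorm_inner_Gmap_sub_le (x : H2) (y : ℝ × ℝ) :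
    ‖⟪x, Gmap K Γ q' y - Gmap K Γ q y⟫_ℝ‖ₑ ≤ ∑' p : ℕ × ℕ,
      (Aset K Γ q' p.1 p.2 ∆ Aset K Γ q p.1 p.2).indicator (fun _ => ‖x p.1‖ₑ + ‖x p.2‖ₑ) y := by
  refine (((hasSum_Gmap hΓ hq' y).sub (hasSum_Gmap hΓ hq y)).mapL (innerSL ℝ x)).enorm_le_of_bounded
    ENNReal.summable.hasSum fun p => ?_
  rw [innerSL_apply_apply, ← apply_indicator_symmDiff (g := fun v => ‖⟪x, v⟫_ℝ‖ₑ)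
    (fun v => by rw [inner_neg_right, enorm_neg])]
  by_cases hy : y ∈ Aset K Γ q' p.1 p.2 ∆ Aset K Γ q p.1 p.2
  · simpa [indicator_of_mem hy] using enorm_inner_jump_le x p
  · simp [indicator_of_notMem hy]

theorem lintegral_enorm_inner_smul_Gmap_sub_le {g : ℝ × ℝ → ℝ} {C : ℝ} (hC : ∀ y, |g y| ≤ C)
    (x : H2) :
    ∫⁻ y, ‖⟪x, g y • (Gmap K Γ q' y - Gmap K Γ q y)⟫_ℝ‖ₑ ≤ ENNReal.ofReal C *
      ∑' p : ℕ × ℕ, (‖x p.1‖ₑ + ‖x p.2‖ₑ) * volume (Aset K Γ q' p.1 p.2 ∆ Aset K Γ q p.1 p.2) := by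
  have hD (p : ℕ × ℕ) : MeasurableSet (Aset K Γ q' p.1 p.2 ∆ Aset K Γ q p.1 p.2) :=
    (measurableSet_Aset K Γ q' p.1 p.2).symmDiff (measurableSet_Aset K Γ q p.1 p.2)
  calc ∫⁻ y, ‖⟪x, g y • (Gmap K Γ q' y - Gmap K Γ q y)⟫_ℝ‖ₑ
      ≤ ∫⁻ y, ENNReal.ofReal C * ∑' p : ℕ × ℕ, (Aset K Γ q' p.1 p.2 ∆ Aset K Γ q p.1 p.2).indicator
          (fun _ => ‖x p.1‖ₑ + ‖x p.2‖ₑ) y := by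
        refine lintegral_mono fun y => ?_
        rw [inner_smul_right, enorm_mul, Real.enorm_eq_ofReal_abs]
        exact mul_le_mul' (ENNReal.ofReal_le_ofReal (hC y)) (enorm_inner_Gmap_sub_le hΓ hq hq' x y)
    _ = ENNReal.ofReal C * ∑' p : ℕ × ℕ,
          (‖x p.1‖ₑ + ‖x p.2‖ₑ) * volume (Aset K Γ q' p.1 p.2 ∆ Aset K Γ q p.1 p.2) := by
        rw [lintegral_const_mul' _ _ ENNReal.ofReal_ne_top,
          lintegral_tsum fun p => (measurable_const.indicator (hD p)).aemeasurable]
        simp_rw [lintegral_indicator_const (hD _)]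

end InnerBound

theorem tsum_mul_volume_symmDiff_Aset_le {K : ℝ} (hK : 0 ≤ K) {Γ : H2 → ℕ → ℕ → ℝ}
    (hΓ : RateMatrix K Γ) {cΓ LΓ : ℝ} (hcΓ0 : 0 ≤ cΓ) (hLΓ0 : 0 ≤ LΓ)
    (hcΓ : ∀ q ∈ simplexS, ∀ j, Summable (fun i => |Γ q i j|) ∧ (∑' i, |Γ q i j|) ≤ cΓ)
    (hLΓ : ∀ q ∈ simplexS, ∀ q' ∈ simplexS, ∀ i,
      Summable (fun j => if j = i then 0 else |Γ q' i j - Γ q i j|) ∧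
      (∑' j, if j = i then 0 else |Γ q' i j - Γ q i j|) ≤ LΓ * ‖q' - q‖)
    {q q' : H2} (hq : q ∈ simplexS) (hq' : q' ∈ simplexS) (x : H2) :
    ∑' p : ℕ × ℕ, (‖x p.1‖ₑ + ‖x p.2‖ₑ) * volume (Aset K Γ q' p.1 p.2 ∆ Aset K Γ q p.1 p.2)
      ≤ ENNReal.ofReal ((2 * LΓ + K + √(cΓ * K)) * ‖x‖ * ‖q' - q‖) := by
  have hw : ∑' i, ENNReal.ofReal (q' i) ≤ 1 := by
    rw [← ENNReal.ofReal_tsum_of_nonneg hq'.1 hq'.2.summable, hq'.2.tsum_eq, ENNReal.ofReal_one]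
  have hd (i : ℕ) : ∑' j, ENNReal.ofReal (if j = i then 0 else |Γ q' i j - Γ q i j|)
      ≤ ENNReal.ofReal (LΓ * ‖q' - q‖) := by
    rw [← ENNReal.ofReal_tsum_of_nonneg (fun j => by split_ifs <;> positivity)
      (hLΓ q hq q' hq' i).1]
    exact ENNReal.ofReal_le_ofReal (hLΓ q hq q' hq' i).2
  have hcol (j : ℕ) : ∑' i, ENNReal.ofReal (Γ q i j) ≤ ENNReal.ofReal cΓ := calc
    ∑' i, ENNReal.ofReal (Γ q i j) ≤ ∑' i, ENNReal.ofReal |Γ q i j| :=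
      ENNReal.tsum_le_tsum fun i => ENNReal.ofReal_le_ofReal (le_abs_self _)
    _ ≤ ENNReal.ofReal cΓ := by
      rw [← ENNReal.ofReal_tsum_of_nonneg (fun i => abs_nonneg _) (hcΓ q hq j).1]
      exact ENNReal.ofReal_le_ofReal (hcΓ q hq j).2
  have hS : ENNReal.ofReal cΓ * ENNReal.ofReal K ≤ ENNReal.ofReal √(cΓ * K) ^ 2 := by
    rw [← ENNReal.ofReal_mul hcΓ0, ← ENNReal.ofReal_pow (Real.sqrt_nonneg _),
      Real.sq_sqrt (mul_nonneg hcΓ0 hK)]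
  calc _ ≤ ∑' p : ℕ × ℕ, (‖x p.1‖ₑ + ‖x p.2‖ₑ) *
        (ENNReal.ofReal (q' p.1) *
            ENNReal.ofReal (if p.2 = p.1 then 0 else |Γ q' p.1 p.2 - Γ q p.1 p.2|)
          + ‖(q' - q) p.1‖ₑ * ENNReal.ofReal (Γ q p.1 p.2)) :=
        ENNReal.tsum_le_tsum fun p =>
          mul_le_mul_right (volume_symmDiff_Aset_le_rate hΓ hq hq' _ _) _
    _ ≤ 2 * ‖x‖ₑ * ENNReal.ofReal (LΓ * ‖q' - q‖)
          + (ENNReal.ofReal K + ENNReal.ofReal √(cΓ * K)) * ‖x‖ₑ * ‖q' - q‖ₑ :=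
        ENNReal.tsum_add_mul_add_mul_le (lp.tsum_enorm_sq x).le (lp.tsum_enorm_sq (q' - q)).le hw hd
          (hΓ.tsum_ofReal_le hq) hcol hS
    _ = _ := by
      have hjump : ENNReal.ofReal (2 * ‖x‖ * (LΓ * ‖q' - q‖))
          = 2 * ‖x‖ₑ * ENNReal.ofReal (LΓ * ‖q' - q‖) := by
        rw [ENNReal.ofReal_mul (by positivity), ENNReal.ofReal_mul zero_le_two, ofReal_norm,
          ENNReal.ofReal_ofNat]
      have hrate : ENNReal.ofReal ((K + √(cΓ * K)) * ‖x‖ * ‖q' - q‖)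
          = (ENNReal.ofReal K + ENNReal.ofReal √(cΓ * K)) * ‖x‖ₑ * ‖q' - q‖ₑ := by
        rw [ENNReal.ofReal_mul (by positivity), ENNReal.ofReal_mul (by positivity),
          ENNReal.ofReal_add hK (Real.sqrt_nonneg _), ofReal_norm, ofReal_norm]
      rw [show (2 * LΓ + K + √(cΓ * K)) * ‖x‖ * ‖q' - q‖
          = 2 * ‖x‖ * (LΓ * ‖q' - q‖) + (K + √(cΓ * K)) * ‖x‖ * ‖q' - q‖ by ring,
        ENNReal.ofReal_add (by positivity) (by positivity), hjump, hrate]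

/-- Under the extra assumptions (i) `sup_{q∈Ŝ} sup_j ∑_i |Γ_ij(q)| ≤ c_Γ` and
(ii) `sup_i ∑_{j≠i} |Γ_ij(q̃) − Γ_ij(q)| ≤ L_Γ ‖q̃ − q‖`, there is `γ₅ ∈ (0,∞)`
such that for every bounded measurable `g : X → ℝ` with `|g| ≤ C` and all
`q, q̃ ∈ Ŝ`, the Bochner integral `∫_X (G(q̃,y) − G(q,y)) g(y) dy` exists in
`ℓ²(ℕ)` and has norm at most `γ₅ C ‖q̃ − q‖`. -/
theorem stmt9 (K : ℝ) (hK0 : 0 ≤ K) (Γ : H2 → ℕ → ℕ → ℝ) (hΓ : RateMatrix K Γ)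
    (cΓ LΓ : ℝ) (hcΓ0 : 0 < cΓ) (hLΓ0 : 0 < LΓ)
    (hcΓ : ∀ q ∈ simplexS, ∀ j, Summable (fun i => |Γ q i j|) ∧
      (∑' i, |Γ q i j|) ≤ cΓ)
    (hLΓ : ∀ q ∈ simplexS, ∀ q' ∈ simplexS, ∀ i,
      Summable (fun j => if j = i then 0 else |Γ q' i j - Γ q i j|) ∧
      (∑' j, if j = i then 0 else |Γ q' i j - Γ q i j|) ≤ LΓ * ‖q' - q‖) :
    ∃ γ₅ : ℝ, 0 < γ₅ ∧
      ∀ g : ℝ × ℝ → ℝ, Measurable g → ∀ C : ℝ, (∀ y, |g y| ≤ C) →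
      ∀ q ∈ simplexS, ∀ q' ∈ simplexS,
        Integrable (fun y : ℝ × ℝ => g y • (Gmap K Γ q' y - Gmap K Γ q y)) volume ∧
        ‖∫ y : ℝ × ℝ, g y • (Gmap K Γ q' y - Gmap K Γ q y)‖ ≤ γ₅ * C * ‖q' - q‖ := by
  refine ⟨2 * LΓ + K + √(cΓ * K), by positivity, fun g hg C hC q hq q' hq' => ?_⟩
  have hC0 : 0 ≤ C := (abs_nonneg _).trans (hC 0)
  have hint : Integrable (fun y => g y • (Gmap K Γ q' y - Gmap K Γ q y)) :=
    ((integrable_Gmap hΓ hq').sub (integrable_Gmap hΓ hq)).bdd_smul C hg.aestronglyMeasurable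
      (ae_of_all _ hC)
  refine ⟨hint, ?_⟩
  set x := ∫ y, g y • (Gmap K Γ q' y - Gmap K Γ q y)
  have hsq : ENNReal.ofReal (‖x‖ ^ 2)
      ≤ ENNReal.ofReal (C * ((2 * LΓ + K + √(cΓ * K)) * ‖x‖ * ‖q' - q‖)) := calc
    ENNReal.ofReal (‖x‖ ^ 2) = ‖∫ y, ⟪x, g y • (Gmap K Γ q' y - Gmap K Γ q y)⟫_ℝ‖ₑ := by
      rw [integral_inner hint, real_inner_self_eq_norm_sq, Real.enorm_eq_ofReal_abs,
        abs_of_nonneg (sq_nonneg _)]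
    _ ≤ ∫⁻ y, ‖⟪x, g y • (Gmap K Γ q' y - Gmap K Γ q y)⟫_ℝ‖ₑ := enorm_integral_le_lintegral_enorm _
    _ ≤ ENNReal.ofReal C * ENNReal.ofReal ((2 * LΓ + K + √(cΓ * K)) * ‖x‖ * ‖q' - q‖) :=
      (lintegral_enorm_inner_smul_Gmap_sub_le hΓ hq hq' hC x).trans (mul_le_mul_right
        (tsum_mul_volume_symmDiff_Aset_le hK0 hΓ hcΓ0.le hLΓ0.le hcΓ hLΓ hq hq' x) _)
    _ = _ := (ENNReal.ofReal_mul hC0).symm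
  have hx_sq := (ENNReal.ofReal_le_ofReal_iff (by positivity)).1 hsq
  rcases (norm_nonneg x).eq_or_lt with hx0 | hx_pos
  · rw [← hx0]
    positivity
  · nlinarith

end
end
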